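/- arXiv:1204.6444 — 2 statements merged into one kernel-verified Lean document; each statement's English description precedes it below -/
import Mathlib

section
/- Let {E_k} be a chain in Ω and suppose that some point x of its impression is accessible through {E_k}, i.e. there is a continuous curve γ : [0,1] → X with γ(1) = x, γ([0,1)) ⊆ Ω, and for every k some t_k ∈ (0,1) with γ([t_k,1)) ⊆ E_k. Then {E_k} is a prime chain (every chain dividing it is equivalent to it) if and only if the impression of {E_k} is the singleton {x}. -/
open Metric Set Filter Topology

/-- The distance between two subsets of a metric space
(infimum of pairwise distances, with `sInf ∅ = 0`). -/
noncomputable def setDist {X : Type*} [MetricSpace X] (A B : Set X) : ℝ :=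
  sInf {d : ℝ | ∃ a ∈ A, ∃ b ∈ B, d = dist a b}

/-- `Ω` is a bounded domain: bounded, nonempty, open, connected, and not all of `X`. -/
def BoundedDomain {X : Type*} [MetricSpace X] (Ω : Set X) : Prop :=
  IsOpen Ω ∧ IsConnected Ω ∧ Bornology.IsBounded Ω ∧ Ω ≠ Set.univ

/-- An acceptable set: a bounded connected set `E ⊊ Ω` whose closure meets `∂Ω`. -/
def Acceptable {X : Type*} [MetricSpace X] (Ω E : Set X) : Prop :=
  Bornology.IsBounded E ∧ IsConnected E ∧ E ⊆ Ω ∧ E ≠ Ω ∧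
    (closure E ∩ frontier Ω).Nonempty

/-- A chain in `Ω`: a nested sequence of acceptable sets whose consecutive
relative boundaries are at positive distance and whose impression
`⋂ k, closure (E k)` lies in `∂Ω`. -/
def IsChainIn {X : Type*} [MetricSpace X] (Ω : Set X) (E : ℕ → Set X) : Prop :=
  (∀ k, Acceptable Ω (E k)) ∧
  (∀ k, E (k + 1) ⊆ E k) ∧
  (∀ k, 0 < setDist (Ω ∩ frontier (E (k + 1))) (Ω ∩ frontier (E k))) ∧
  (⋂ k, closure (E k)) ⊆ frontier Ω

/-- A chain `E` divides a chain `F` if each `F k` contains some `E l`. -/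
def Divides {X : Type*} (E F : ℕ → Set X) : Prop := ∀ k, ∃ l, E l ⊆ F k

/-- Two chains are equivalent if each divides the other. -/
def EquivChains {X : Type*} (E F : ℕ → Set X) : Prop := Divides E F ∧ Divides F E

/-- A prime chain: a chain such that every chain dividing it is equivalent to it. -/
def IsPrimeChain {X : Type*} [MetricSpace X] (Ω : Set X) (E : ℕ → Set X) : Prop :=
  IsChainIn Ω E ∧ ∀ F : ℕ → Set X, IsChainIn Ω F → Divides F E → EquivChains F E

/-- A boundary point `x` is accessible if some curve in `Ω` ends at `x`. -/
def Accessible {X : Type*} [MetricSpace X] (Ω : Set X) (x : X) : Prop :=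
  ∃ γ : ℝ → X, ContinuousOn γ (Set.Icc 0 1) ∧ γ 1 = x ∧ γ '' Set.Ico 0 1 ⊆ Ω

/-- `Ω` is finitely connected at `x₀` if each ball around `x₀` contains an open
neighborhood `G` of `x₀` such that `G ∩ Ω` has finitely many components. -/
def FinitelyConnectedAt {X : Type*} [MetricSpace X] (Ω : Set X) (x₀ : X) : Prop :=
  ∀ r : ℝ, 0 < r → ∃ G : Set X, IsOpen G ∧ x₀ ∈ G ∧ G ⊆ Metric.ball x₀ r ∧
    {C : Set X | ∃ y ∈ G ∩ Ω, C = connectedComponentIn (G ∩ Ω) y}.Finite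

lemma frontier_hit' {X : Type*} [TopologicalSpace X] {s t : Set X} (hs : IsPreconnected s)
    (h1 : (s ∩ t).Nonempty) (h2 : (s \ t).Nonempty) : (s ∩ frontier t).Nonempty := by
  by_contra h
  rw [Set.not_nonempty_iff_eq_empty, Set.eq_empty_iff_forall_notMem] at h
  have hsub : s ⊆ interior t ∪ (closure t)ᶜ := by
    intro z hz
    by_cases hc : z ∈ closure t
    · left; by_contra hi; exact h z ⟨hz, hc, hi⟩
    · right; exact hc
  have hu : (s ∩ interior t).Nonempty := by
    obtain ⟨z, hzs, hzt⟩ := h1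
    refine ⟨z, hzs, ?_⟩
    by_contra hi
    exact h z ⟨hzs, subset_closure hzt, hi⟩
  have hv : (s ∩ (closure t)ᶜ).Nonempty := by
    obtain ⟨z, hzs, hzt⟩ := h2
    refine ⟨z, hzs, fun hc => ?_⟩
    exact h z ⟨hzs, hc, fun hi => hzt (interior_subset hi)⟩
  obtain ⟨z, _, hzi, hzc⟩ := hs _ _ isOpen_interior isClosed_closure.isOpen_compl hsub hu hv
  exact hzc (subset_closure (interior_subset hzi))

lemma setDist_le' {X : Type*} [MetricSpace X] {A B : Set X} {a b : X} (ha : a ∈ A) (hb : b ∈ B) :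
    setDist A B ≤ dist a b := by
  apply csInf_le
  · refine ⟨0, ?_⟩
    rintro d ⟨a', _, b', _, rfl⟩
    exact dist_nonneg
  · exact ⟨a, ha, b, hb, rfl⟩

lemma shrink' {X : Type*} [MetricSpace X] [ProperSpace X] {E : ℕ → Set X} {x : X}
    (hb : Bornology.IsBounded (E 0)) (hmono : ∀ k, E (k+1) ⊆ E k)
    (himp : (⋂ k, closure (E k)) = {x}) {ε : ℝ} (hε : 0 < ε) :
    ∃ l, closure (E l) ⊆ Metric.ball x ε := by
  have hanti : Antitone E := antitone_nat_of_succ_le hmono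
  have hcomp : IsCompact (closure (E 0)) := hb.isCompact_closure
  have key : ∃ i : ℕ, closure (E 0) ∩ (closure (E i) ∩ (Metric.ball x ε)ᶜ) = ∅ := by
    apply hcomp.elim_directed_family_closed
    · exact fun i => isClosed_closure.inter Metric.isOpen_ball.isClosed_compl
    · rw [Set.eq_empty_iff_forall_notMem]
      intro z hz
      simp only [Set.mem_inter_iff, Set.mem_iInter] at hz
      have hz1 : z ∈ ⋂ k, closure (E k) := Set.mem_iInter.mpr fun k => (hz.2 k).1
      rw [himp, Set.mem_singleton_iff] at hz1
      exact (hz.2 0).2 (by rw [hz1]; exact Metric.mem_ball_self hε)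
    · intro i j
      exact ⟨max i j, fun z hz => ⟨closure_mono (hanti (le_max_left i j)) hz.1, hz.2⟩,
             fun z hz => ⟨closure_mono (hanti (le_max_right i j)) hz.1, hz.2⟩⟩
  obtain ⟨i, hi⟩ := key
  refine ⟨i, fun z hz => ?_⟩
  by_contra hzb
  rw [Set.eq_empty_iff_forall_notMem] at hi
  exact hi z ⟨closure_mono (hanti (Nat.zero_le i)) hz, hz, hzb⟩

/-- If a point `x` of the impression of a chain `E` is accessible through `E`,
then `E` is a prime chain if and only if its impression is `{x}`. -/
theorem statement7 {X : Type*} [MetricSpace X] [ProperSpace X] [LocallyConnectedSpace X]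
    (Ω : Set X) (hΩ : BoundedDomain Ω)
    (E : ℕ → Set X) (hE : IsChainIn Ω E)
    (x : X) (hxI : x ∈ ⋂ k, closure (E k))
    (γ : ℝ → X) (hγc : ContinuousOn γ (Set.Icc 0 1)) (hγ1 : γ 1 = x)
    (hγΩ : γ '' Set.Ico 0 1 ⊆ Ω)
    (hthrough : ∀ k, ∃ t ∈ Set.Ioo (0 : ℝ) 1, γ '' Set.Ico t 1 ⊆ E k) :
    IsPrimeChain Ω E ↔ (⋂ k, closure (E k)) = {x} := by
  obtain ⟨hΩo, hΩconn, hΩb, hΩuniv⟩ := hΩ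
  obtain ⟨hacc, hmono, hdist, himpfr⟩ := hE
  have hxfr : x ∈ frontier Ω := himpfr hxI
  have hxΩ : x ∉ Ω := by
    intro hx
    have h0 := hΩo.inter_frontier_eq
    rw [Set.eq_empty_iff_forall_notMem] at h0
    exact h0 x ⟨hx, hxfr⟩
  -- curve tail selection
  have htail : ∀ ε : ℝ, 0 < ε → ∃ s : ℝ, s ∈ Set.Ico (0:ℝ) 1 ∧
      ∀ t, s ≤ t → t < 1 → γ t ∈ Metric.ball x ε ∩ Ω := by
    intro ε hε
    have hct : ContinuousWithinAt γ (Set.Icc 0 1) 1 :=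
      hγc 1 (Set.right_mem_Icc.mpr zero_le_one)
    have hten : Tendsto γ (𝓝[Set.Icc (0:ℝ) 1] 1) (𝓝 x) := hγ1 ▸ hct
    have hmem : {t : ℝ | γ t ∈ Metric.ball x ε} ∈ 𝓝[Set.Icc (0:ℝ) 1] 1 :=
      hten (Metric.ball_mem_nhds x hε)
    rw [mem_nhdsWithin] at hmem
    obtain ⟨U, hUo, hU1, hUsub⟩ := hmem
    obtain ⟨η, hη, hηsub⟩ := Metric.isOpen_iff.mp hUo 1 hU1
    refine ⟨max (1 - η/2) (1/2), ⟨le_max_of_le_right (by norm_num),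
      max_lt (by linarith) (by norm_num)⟩, ?_⟩
    intro t hst ht1
    have hhalf : (1:ℝ)/2 ≤ t := le_trans (le_max_right _ _) hst
    have ht0 : (0:ℝ) ≤ t := by linarith
    have htU : t ∈ U := by
      apply hηsub
      rw [Metric.mem_ball, Real.dist_eq]
      have h1 : 1 - η/2 ≤ t := le_trans (le_max_left _ _) hst
      rw [abs_sub_lt_iff]
      constructor <;> linarith
    exact ⟨hUsub ⟨htU, ht0, le_of_lt ht1⟩, hγΩ ⟨t, ⟨ht0, ht1⟩, rfl⟩⟩
  -- the point y and radii
  obtain ⟨y, hy⟩ := hΩconn.nonempty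
  have hyx : x ≠ y := fun h => hxΩ (h ▸ hy)
  set R := dist x y with hRdef
  have hR0 : 0 < R := dist_pos.mpr hyx
  set r : ℕ → ℝ := fun l => R / 2^(l+1) with hrdef
  have hr0 : ∀ l, 0 < r l := fun l => div_pos hR0 (by positivity)
  have hhalfr : ∀ l, r (l+1) = r l / 2 := by
    intro l
    simp only [hrdef]
    rw [pow_succ]
    ring
  have hrleR : ∀ l, r l ≤ R := by
    intro l
    simp only [hrdef]
    apply div_le_self hR0.le
    exact one_le_pow₀ one_le_two
  have hrsmall : ∀ d : ℝ, 0 < d → ∃ l, r l < d := by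
    intro d hd
    obtain ⟨n, hn⟩ := pow_unbounded_of_one_lt (R / d) (one_lt_two (α := ℝ))
    refine ⟨n, ?_⟩
    show R / 2^(n+1) < d
    rw [div_lt_iff₀ (by positivity)]
    have h2 : (2:ℝ)^n ≤ 2^(n+1) := pow_le_pow_right₀ one_le_two (Nat.le_succ n)
    calc R = d * (R/d) := by field_simp
    _ < d * 2^(n+1) := mul_lt_mul_of_pos_left (lt_of_lt_of_le hn h2) hd
  -- the chain F
  choose s hsI hsP using fun l => htail (r l) (hr0 l)
  set F : ℕ → Set X := fun l => connectedComponentIn (Metric.ball x (r l) ∩ Ω) (γ (s l))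
    with hFdef
  have hbase : ∀ l, γ (s l) ∈ Metric.ball x (r l) ∩ Ω := fun l => hsP l (s l) le_rfl (hsI l).2
  have himg : ∀ l, γ '' Set.Ico (s l) 1 ⊆ F l := by
    intro l
    apply IsPreconnected.subset_connectedComponentIn
    · exact isPreconnected_Ico.image γ
        (hγc.mono fun t ht => ⟨le_trans (hsI l).1 ht.1, le_of_lt ht.2⟩)
    · exact ⟨s l, ⟨le_rfl, (hsI l).2⟩, rfl⟩
    · rintro _ ⟨t, ht, rfl⟩
      exact hsP l t ht.1 ht.2
  have hFsub : ∀ l, F l ⊆ Metric.ball x (r l) ∩ Ω := fun l => connectedComponentIn_subset _ _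
  have hFΩ : ∀ l, F l ⊆ Ω := fun l => (hFsub l).trans Set.inter_subset_right
  have hFopen : ∀ l, IsOpen (F l) := fun l => (Metric.isOpen_ball.inter hΩo).connectedComponentIn
  have hFconn : ∀ l, IsConnected (F l) :=
    fun l => ⟨⟨γ (s l), mem_connectedComponentIn (hbase l)⟩, isPreconnected_connectedComponentIn⟩
  have hyF : ∀ l, y ∉ F l := by
    intro l hyF
    have h := ((hFsub l) hyF).1
    rw [Metric.mem_ball, dist_comm, ← hRdef] at h
    exact absurd (hrleR l) (not_le.mpr h)
  have hFneΩ : ∀ l, F l ≠ Ω := fun l h => hyF l (h ▸ hy)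
  have hclosball : ∀ l, closure (F l) ⊆ Metric.closedBall x (r l) := fun l =>
    (closure_mono ((hFsub l).trans Set.inter_subset_left)).trans Metric.closure_ball_subset_closedBall
  have hxclos : ∀ l, x ∈ closure (F l) := by
    intro l
    rw [Metric.mem_closure_iff]
    intro ε hε
    obtain ⟨s', hs'I, hs'P⟩ := htail ε hε
    have ht1 : max (s l) s' < 1 := max_lt (hsI l).2 hs'I.2
    refine ⟨γ (max (s l) s'), himg l ⟨_, ⟨le_max_left _ _, ht1⟩, rfl⟩, ?_⟩
    have := (hs'P _ (le_max_right _ _) ht1).1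
    rw [Metric.mem_ball] at this
    rw [dist_comm]
    exact this
  have hFnested : ∀ l, F (l+1) ⊆ F l := by
    intro l
    have ht1 : max (s l) (s (l+1)) < 1 := max_lt (hsI l).2 (hsI (l+1)).2
    have hpF1 : γ (max (s l) (s (l+1))) ∈ F (l+1) := himg (l+1) ⟨_, ⟨le_max_right _ _, ht1⟩, rfl⟩
    have hpF : γ (max (s l) (s (l+1))) ∈ F l := himg l ⟨_, ⟨le_max_left _ _, ht1⟩, rfl⟩
    have hsub : F (l+1) ⊆ connectedComponentIn (Metric.ball x (r l) ∩ Ω) (γ (max (s l) (s (l+1)))) := by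
      apply IsPreconnected.subset_connectedComponentIn isPreconnected_connectedComponentIn hpF1
      refine (hFsub (l+1)).trans ?_
      intro z hz
      refine ⟨?_, hz.2⟩
      have := hz.1
      rw [Metric.mem_ball] at this ⊢
      have hlt : r (l+1) ≤ r l := by rw [hhalfr l]; linarith [hr0 l]
      linarith
    rwa [← connectedComponentIn_eq (F := Metric.ball x (r l) ∩ Ω) hpF] at hsub
  have hfr1 : ∀ l, ∀ z ∈ Ω ∩ frontier (F l), r l ≤ dist z x := by
    rintro l z ⟨hzΩ, hzfr⟩
    by_contra hlt
    push_neg at hlt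
    have hzU : z ∈ Metric.ball x (r l) ∩ Ω := ⟨Metric.mem_ball.mpr hlt, hzΩ⟩
    have hznF : z ∉ F l := by
      intro hzF
      have h0 := (hFopen l).inter_frontier_eq
      rw [Set.eq_empty_iff_forall_notMem] at h0
      exact h0 z ⟨hzF, hzfr⟩
    have hcompnhds : connectedComponentIn (Metric.ball x (r l) ∩ Ω) z ∈ 𝓝 z :=
      connectedComponentIn_mem_nhds ((Metric.isOpen_ball.inter hΩo).mem_nhds hzU)
    have hzc : z ∈ closure (F l) := hzfr.1
    obtain ⟨w, hw1, hw2⟩ := mem_closure_iff_nhds.mp hzc _ hcompnhds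
    have e1 := connectedComponentIn_eq (F := Metric.ball x (r l) ∩ Ω) hw1
    have e2 := connectedComponentIn_eq (F := Metric.ball x (r l) ∩ Ω) (hw2 : w ∈ F l)
    have hz2 : z ∈ connectedComponentIn (Metric.ball x (r l) ∩ Ω) w :=
      e1 ▸ mem_connectedComponentIn hzU
    exact hznF (by rw [hFdef]; show z ∈ connectedComponentIn _ _; rw [e2]; exact hz2)
  have hfrne : ∀ l, (Ω ∩ frontier (F l)).Nonempty := by
    intro l
    apply frontier_hit' hΩconn.isPreconnected
    · obtain ⟨w, hw⟩ := (hFconn l).nonempty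
      exact ⟨w, hFΩ l hw, hw⟩
    · exact ⟨y, hy, hyF l⟩
  have hFchain : IsChainIn Ω F := by
    refine ⟨?_, hFnested, ?_, ?_⟩
    · intro l
      exact ⟨Metric.isBounded_ball.subset ((hFsub l).trans Set.inter_subset_left),
        hFconn l, hFΩ l, hFneΩ l, ⟨x, hxclos l, hxfr⟩⟩
    · intro l
      have hpos : 0 < r l / 2 := half_pos (hr0 l)
      refine lt_of_lt_of_le hpos (le_csInf ?_ ?_)
      · obtain ⟨a, ha⟩ := hfrne (l+1)
        obtain ⟨b, hb⟩ := hfrne l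
        exact ⟨dist a b, a, ha, b, hb, rfl⟩
      · rintro d ⟨a, ha, b, hb, rfl⟩
        have h1 : dist a x ≤ r (l+1) :=
          Metric.mem_closedBall.mp (hclosball (l+1) (frontier_subset_closure ha.2))
        have h2 : r l ≤ dist b x := hfr1 l b hb
        have h3 : dist b x ≤ dist b a + dist a x := dist_triangle _ _ _
        have h4 : r (l+1) = r l / 2 := hhalfr l
        have h5 : dist b a = dist a b := dist_comm b a
        linarith
    · intro z hz
      have hzx : z = x := by
        by_contra hne
        obtain ⟨l, hl⟩ := hrsmall _ (dist_pos.mpr hne)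
        exact absurd (Metric.mem_closedBall.mp (hclosball l (Set.mem_iInter.mp hz l)))
          (not_le.mpr hl)
      exact hzx ▸ hxfr
  have hFdivE : Divides F E := by
    intro k
    have hδ := hdist k
    obtain ⟨l, hl⟩ := hrsmall _ (half_pos hδ)
    refine ⟨l, ?_⟩
    by_contra hns
    obtain ⟨b0, hb0F, hb0E⟩ := Set.not_subset.mp hns
    obtain ⟨t1, ht1I, ht1⟩ := hthrough (k+1)
    have htlt : max (s l) t1 < 1 := max_lt (hsI l).2 ht1I.2
    have hpF : γ (max (s l) t1) ∈ F l := himg l ⟨_, ⟨le_max_left _ _, htlt⟩, rfl⟩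
    have hpE : γ (max (s l) t1) ∈ E (k+1) := ht1 ⟨_, ⟨le_max_right _ _, htlt⟩, rfl⟩
    have hconn := (hFconn l).isPreconnected
    obtain ⟨a, haF, hafr⟩ := frontier_hit' hconn ⟨_, hpF, hpE⟩
      ⟨b0, hb0F, fun h => hb0E (hmono k h)⟩
    obtain ⟨b, hbF, hbfr⟩ := frontier_hit' hconn ⟨_, hpF, hmono k hpE⟩ ⟨b0, hb0F, hb0E⟩
    have h1 : setDist (Ω ∩ frontier (E (k+1))) (Ω ∩ frontier (E k)) ≤ dist a b :=
      setDist_le' ⟨hFΩ l haF, hafr⟩ ⟨hFΩ l hbF, hbfr⟩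
    have h2 : dist a x < r l := Metric.mem_ball.mp ((hFsub l) haF).1
    have h3 : dist b x < r l := Metric.mem_ball.mp ((hFsub l) hbF).1
    have h4 : dist a b ≤ dist a x + dist x b := dist_triangle _ _ _
    rw [dist_comm x b] at h4
    linarith
  constructor
  · -- prime → impression = {x}
    intro hP
    have hEdivF : Divides E F := (hP.2 F hFchain hFdivE).2
    apply Set.Subset.antisymm
    · intro z hz
      rw [Set.mem_singleton_iff]
      have hball : ∀ k, dist z x ≤ r k := by
        intro k
        obtain ⟨l, hl⟩ := hEdivF k
        exact Metric.mem_closedBall.mp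
          (hclosball k (closure_mono hl (Set.mem_iInter.mp hz l)))
      by_contra hne
      obtain ⟨l, hl⟩ := hrsmall _ (dist_pos.mpr hne)
      exact absurd (hball l) (not_le.mpr hl)
    · exact Set.singleton_subset_iff.mpr hxI
  · -- impression = {x} → prime
    intro himp
    refine ⟨⟨hacc, hmono, hdist, himpfr⟩, ?_⟩
    intro G hG hGE
    refine ⟨hGE, ?_⟩
    intro k
    have hδ := hG.2.2.1 k
    obtain ⟨l, hl⟩ := shrink' (hacc 0).1 hmono himp (half_pos hδ)
    refine ⟨l, ?_⟩
    by_contra hns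
    obtain ⟨b0, hb0E, hb0G⟩ := Set.not_subset.mp hns
    obtain ⟨m0, hm0⟩ := hGE l
    have hGanti : Antitone G := antitone_nat_of_succ_le hG.2.1
    have hGm1 : G (max m0 (k+1)) ⊆ E l := (hGanti (le_max_left _ _)).trans hm0
    have hGm2 : G (max m0 (k+1)) ⊆ G (k+1) := hGanti (le_max_right _ _)
    obtain ⟨w, hw⟩ := (hG.1 (max m0 (k+1))).2.1.nonempty
    have hconn := (hacc l).2.1.isPreconnected
    have hsubΩ := (hacc l).2.2.1
    obtain ⟨a, haE, hafr⟩ := frontier_hit' hconn ⟨w, hGm1 hw, hGm2 hw⟩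
      ⟨b0, hb0E, fun h => hb0G (hG.2.1 k h)⟩
    obtain ⟨b, hbE, hbfr⟩ := frontier_hit' hconn ⟨w, hGm1 hw, hG.2.1 k (hGm2 hw)⟩
      ⟨b0, hb0E, hb0G⟩
    have h1 : setDist (Ω ∩ frontier (G (k+1))) (Ω ∩ frontier (G k)) ≤ dist a b :=
      setDist_le' ⟨hsubΩ haE, hafr⟩ ⟨hsubΩ hbE, hbfr⟩
    have h2 : dist a x < _ := Metric.mem_ball.mp (hl (subset_closure haE))
    have h3 : dist b x < _ := Metric.mem_ball.mp (hl (subset_closure hbE))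
    have h4 : dist a b ≤ dist a x + dist x b := dist_triangle _ _ _
    rw [dist_comm x b] at h4
    linarith
end

section
/- Let {E_k} and {F_k} be chains in Ω such that {F_k} does not divide {E_k}. Then there exists an index k with the following properties: F_l \ E_k is nonempty for every l, and for every l > k, every point x ∈ E_l and every point y ∈ F_l \ E_k one has d_M(x, y) ≥ dist(Ω ∩ ∂E_{k+1}, Ω ∩ ∂E_k) > 0, i.e. every connected subset of Ω containing both x and y has diameter at least dist(Ω ∩ ∂E_{k+1}, Ω ∩ ∂E_k). -/
open Metric Set Filter Topology

lemma preconn_inter_frontier_nonempty {X : Type*} [TopologicalSpace X] {A s : Set X}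
    (hA : IsPreconnected A) (h1 : (A ∩ s).Nonempty) (h2 : (A \ s).Nonempty) :
    (A ∩ frontier s).Nonempty := by
  by_contra hfr
  rw [Set.not_nonempty_iff_eq_empty] at hfr
  have hsub : A ⊆ interior s ∪ interior sᶜ := by
    intro a ha
    have hafr : a ∉ frontier s := fun h =>
      Set.eq_empty_iff_forall_notMem.mp hfr a ⟨ha, h⟩
    rw [frontier, Set.mem_diff, not_and, not_not] at hafr
    by_cases hc : a ∈ closure s
    · exact Or.inl (hafr hc)
    · exact Or.inr (by rwa [interior_compl, Set.mem_compl_iff])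
  obtain ⟨x, hxA, hxs⟩ := h1
  obtain ⟨y, hyA, hys⟩ := h2
  have hxu : x ∈ interior s ∪ interior sᶜ := hsub hxA
  have hxu' : x ∈ interior s := by
    rcases hxu with h | h
    · exact h
    · exact absurd hxs (interior_subset h)
  have hyu : y ∈ interior sᶜ := by
    rcases hsub hyA with h | h
    · exact absurd (interior_subset h) hys
    · exact h
  obtain ⟨z, hzA, hz1, hz2⟩ := hA (interior s) (interior sᶜ) isOpen_interior
    isOpen_interior hsub ⟨x, hxA, hxu'⟩ ⟨y, hyA, hyu⟩
  exact (interior_subset hz2) (interior_subset hz1)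

/-- If the chain `F` does not divide the chain `E`, then for some index `k`,
every `F l \ E k` is nonempty, and for `l > k`, any `x ∈ E l` and
`y ∈ F l \ E k` satisfy `d_M(x,y) ≥ dist(Ω ∩ ∂E (k+1), Ω ∩ ∂E k) > 0`, i.e.
every connected subset of `Ω` containing both `x` and `y` has diameter at
least `dist(Ω ∩ ∂E (k+1), Ω ∩ ∂E k)`. -/
theorem statement9 {X : Type*} [MetricSpace X] [ProperSpace X]
    (Ω : Set X) (hΩ : BoundedDomain Ω)
    (E F : ℕ → Set X) (hE : IsChainIn Ω E) (hF : IsChainIn Ω F)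
    (hnd : ¬ Divides F E) :
    ∃ k : ℕ, (∀ l, (F l \ E k).Nonempty) ∧
      0 < setDist (Ω ∩ frontier (E (k + 1))) (Ω ∩ frontier (E k)) ∧
      ∀ l > k, ∀ x ∈ E l, ∀ y ∈ F l \ E k, ∀ A : Set X,
        A ⊆ Ω → IsConnected A → x ∈ A → y ∈ A →
        setDist (Ω ∩ frontier (E (k + 1))) (Ω ∩ frontier (E k)) ≤
          Metric.diam A := by

  have hmono : ∀ m n : ℕ, m ≤ n → E n ⊆ E m := by
    intro m n hmn
    induction n, hmn using Nat.le_induction with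
    | base => exact subset_rfl
    | succ n hn ih => exact (hE.2.1 n).trans ih
  simp only [Divides, not_forall, not_exists] at hnd
  obtain ⟨k, hk⟩ := hnd
  refine ⟨k, fun l => Set.diff_nonempty.mpr (hk l), hE.2.2.1 k, ?_⟩
  intro l hl x hx y hy A hAΩ hA hxA hyA
  have hxk1 : x ∈ E (k + 1) := hmono (k + 1) l hl hx
  have hyk : y ∉ E k := hy.2
  have hyk1 : y ∉ E (k + 1) := fun h => hyk (hE.2.1 k h)
  obtain ⟨a, haA, ha⟩ := preconn_inter_frontier_nonempty hA.isPreconnected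
    ⟨x, hxA, hxk1⟩ ⟨y, hyA, hyk1⟩
  obtain ⟨b, hbA, hb⟩ := preconn_inter_frontier_nonempty hA.isPreconnected
    ⟨x, hxA, hmono k l (le_of_lt hl) hx⟩ ⟨y, hyA, hyk⟩
  have h1 : setDist (Ω ∩ frontier (E (k + 1))) (Ω ∩ frontier (E k)) ≤ dist a b := by
    apply csInf_le
    · exact ⟨0, fun d ⟨_, _, _, _, hd⟩ => hd ▸ dist_nonneg⟩
    · exact ⟨a, ⟨hAΩ haA, ha⟩, b, ⟨hAΩ hbA, hb⟩, rfl⟩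
  have hAbd : Bornology.IsBounded A := hΩ.2.2.1.subset hAΩ
  exact h1.trans (Metric.dist_le_diam_of_mem hAbd haA hbA)
end
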